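/- Spectral symmetry in dimension one: regarding the connection Laplacian L as a complex matrix, the multiset of roots (with multiplicity) of the characteristic polynomial of L² is invariant under the map z ↦ z⁻¹; equivalently, L² and L⁻² are isospectral. -/

import Mathlib

/-!
Write `L = [[1, B], [Bᵀ, BᵀB - 1]]` with `B` the vertex–edge incidence matrix. It factors as
`L = P U` with `P = [[1, 0], [Bᵀ, 1]]` and the involution `U = [[1, B], [0, -1]]`, so
`L⁻¹ = U P⁻¹` is conjugate to the matrix `L'` of the same shape with `Bᵀ` replaced by `-Bᵀ`.
A Schur complement gives `(s - 1)^e det(s - L) = (s - 1)^v det((s² - 1) - s BᵀB)`, and for `L'`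
the last factor is the same with `s` replaced by `-s`. Hence
`det(s - L) det(-s - L) = det(s - L') det(-s - L')`, that is, `L²` and `L'²`, and so `L²` and
`L⁻²`, have the same characteristic polynomial. As `det L = ±1`, the eigenvalues of `L⁻²` are the
inverses of those of `L²`.
-/

open Matrix

variable {V : Type*} [Fintype V] [DecidableEq V]

/-- The simplices of the 1-dimensional simplicial complex of a graph: vertices and edges. -/
abbrev Simplex (G : SimpleGraph V) [DecidableRel G.Adj] := V ⊕ G.edgeSet

variable (G : SimpleGraph V) [DecidableRel G.Adj]

def sVerts : Simplex G → Set V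
  | Sum.inl u => {u}
  | Sum.inr f => {w | w ∈ (f : Sym2 V)}

instance (x : Simplex G) (w : V) : Decidable (w ∈ sVerts G x) :=
  match x with
  | Sum.inl u => decidable_of_iff (w = u) (by simp [sVerts])
  | Sum.inr f => decidable_of_iff (w ∈ (f : Sym2 V)) (by simp [sVerts])

def touches (x y : Simplex G) : Prop := ∃ w, w ∈ sVerts G x ∧ w ∈ sVerts G y

instance : DecidableRel (touches G) := fun _ _ => Fintype.decidableExistsFintype

/-- The connection Laplacian. -/
def connL : Matrix (Simplex G) (Simplex G) ℤ :=
  Matrix.of fun x y => if touches G x y then 1 else 0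

open Polynomial

namespace Matrix

variable {m n : Type*} [Fintype m] [Fintype n] [DecidableEq m] [DecidableEq n]

theorem eval_charpoly_sq {R : Type*} [CommRing R] (M : Matrix n n R) (s : R) :
    (M ^ 2).charpoly.eval (s ^ 2)
      = (-1) ^ Fintype.card n * M.charpoly.eval s * M.charpoly.eval (-s) := by
  have h : scalar n (s ^ 2) - M ^ 2 = -((scalar n s - M) * (scalar n (-s) - M)) := by
    simp only [map_neg, map_mul, sq, sub_mul, mul_sub, (scalar_commute s (Commute.all s) M).eq]
    noncomm_ring
  rw [eval_charpoly, eval_charpoly, eval_charpoly, h, det_neg, det_mul, mul_assoc]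

section Field

variable {K : Type*} [Field K]

theorem eval_charpoly_inv (M : Matrix n n K) (hM : IsUnit M.det) {z : K} (hz : z ≠ 0) :
    M⁻¹.charpoly.eval z = (-z) ^ Fintype.card n * M.det⁻¹ * M.charpoly.eval z⁻¹ := by
  have h : scalar n z - M⁻¹ = (-z) • M⁻¹ * (scalar n z⁻¹ - M) := by
    simp only [scalar_apply, ← smul_one_eq_diagonal, Matrix.mul_sub, smul_mul_assoc,
      Matrix.mul_smul, Matrix.mul_one, nonsing_inv_mul M hM]
    rw [smul_sub, smul_smul, neg_mul, mul_inv_cancel₀ hz]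
    module
  rw [eval_charpoly, eval_charpoly, h, det_mul, det_smul, det_nonsing_inv, Ring.inverse_eq_inv']

theorem roots_charpoly_inv [IsAlgClosed K] (M : Matrix n n K) (hM : IsUnit M.det) :
    M⁻¹.charpoly.roots = M.charpoly.roots.map (·⁻¹) := by
  set r := M.charpoly.roots
  have hsplit : M.charpoly = (r.map fun a => X - C a).prod :=
    (IsAlgClosed.splits _).eq_prod_roots_of_monic (charpoly_monic M)
  have hcard : Multiset.card r = Fintype.card n := by
    rw [← (IsAlgClosed.splits _).natDegree_eq_card_roots, charpoly_natDegree_eq_dim]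
  have hdet : M.det = r.prod := det_eq_prod_roots_charpoly M
  have hr : ∀ a ∈ r, a ≠ 0 := fun a ha h0 =>
    hM.ne_zero (hdet ▸ Multiset.prod_eq_zero (h0 ▸ ha))
  suffices M⁻¹.charpoly = ((r.map (·⁻¹)).map fun a => X - C a).prod by
    rw [this, roots_multiset_prod_X_sub_C]
  refine eq_of_infinite_eval_eq _ _
    ((Set.finite_singleton 0).infinite_compl.mono fun z (hz : z ≠ 0) => ?_)
  rw [Set.mem_ofPred_eq, eval_charpoly_inv M hM hz, hsplit, eval_multiset_prod,
    eval_multiset_prod, Multiset.map_map, Multiset.map_map, Multiset.map_map]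
  have hfactor : ∀ a ∈ r, ((eval z ∘ fun a => X - C a) ∘ fun a => a⁻¹) a
      = -z * a⁻¹ * (z⁻¹ - a) := fun a ha => by
    simp only [Function.comp_apply, eval_sub, eval_X, eval_C]
    field_simp [hr a ha]
    ring
  rw [Multiset.map_congr rfl hfactor, Multiset.prod_map_mul, Multiset.prod_map_mul,
    Multiset.map_const', Multiset.prod_replicate, hcard, Multiset.prod_map_inv', ← hdet]
  simp

end Field

/-- For `C = Bᵀ` this is the shape of the connection Laplacian of a graph with vertex–edge
incidence matrix `B`. The inverse is conjugate to the same shape with `C` replaced by `-C`,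
which is why `C` is not tied to `B`. -/
def connectionMatrix {R : Type*} [Ring R] (B : Matrix m n R) (C : Matrix n m R) :
    Matrix (m ⊕ n) (m ⊕ n) R :=
  fromBlocks 1 B C (C * B - 1)

section CommRing

variable {R : Type*} [CommRing R] (B : Matrix m n R) (C : Matrix n m R)

theorem connectionMatrix_eq_mul :
    connectionMatrix B C = fromBlocks 1 0 C 1 * fromBlocks 1 B 0 (-1) := by
  simp [connectionMatrix, fromBlocks_multiply, sub_eq_add_neg]

theorem fromBlocks_one_zero_mul_neg :
    fromBlocks (1 : Matrix m m R) 0 C (1 : Matrix n n R) * fromBlocks 1 0 (-C) 1 = 1 := by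
  simp [fromBlocks_multiply, fromBlocks_one]

theorem fromBlocks_one_neg_one_mul_self :
    fromBlocks (1 : Matrix m m R) B 0 (-1 : Matrix n n R) * fromBlocks 1 B 0 (-1) = 1 := by
  simp [fromBlocks_multiply, fromBlocks_one]

theorem det_connectionMatrix : (connectionMatrix B C).det = (-1) ^ Fintype.card n := by
  rw [connectionMatrix_eq_mul, det_mul, det_fromBlocks_zero₁₂, det_fromBlocks_zero₂₁]
  simp [det_neg]

theorem inv_connectionMatrix :
    (connectionMatrix B C)⁻¹ = fromBlocks 1 B 0 (-1) * fromBlocks 1 0 (-C) 1 := by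
  apply inv_eq_right_inv
  rw [connectionMatrix_eq_mul, mul_assoc, ← mul_assoc (fromBlocks 1 B 0 (-1)),
    fromBlocks_one_neg_one_mul_self, one_mul, fromBlocks_one_zero_mul_neg]

theorem charpoly_inv_connectionMatrix_sq_eq_neg :
    ((connectionMatrix B C)⁻¹ ^ 2).charpoly = (connectionMatrix B (-C) ^ 2).charpoly := by
  rw [inv_connectionMatrix, connectionMatrix_eq_mul, sq, sq, mul_assoc, charpoly_mul_comm]
  simp only [mul_assoc]

theorem sub_one_pow_mul_eval_charpoly_connectionMatrix (s : R) :
    (s - 1) ^ Fintype.card n * (connectionMatrix B C).charpoly.eval s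
      = (s - 1) ^ Fintype.card m * ((s ^ 2 - 1) • 1 - s • (C * B)).det := by
  have h : (scalar (m ⊕ n) s - connectionMatrix B C) * fromBlocks 1 B 0 ((s - 1) • 1)
      = fromBlocks ((s - 1) • 1) 0 (-C) ((s ^ 2 - 1) • 1 - s • (C * B)) := by
    rw [scalar_apply, ← smul_one_eq_diagonal, ← fromBlocks_one, fromBlocks_smul, connectionMatrix,
      sub_eq_add_neg, fromBlocks_neg, fromBlocks_add, fromBlocks_multiply]
    congr 1 <;> simp [Matrix.add_mul, Matrix.mul_smul, Matrix.smul_mul] <;> module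
  have hdet := congrArg det h
  rw [det_mul, det_fromBlocks_zero₂₁, det_fromBlocks_zero₁₂] at hdet
  simp only [det_one, det_smul, mul_one, one_mul] at hdet
  rw [eval_charpoly, ← hdet, mul_comm]

end CommRing

section Field

variable {K : Type*} [Field K] (B : Matrix m n K) (C : Matrix n m K)

/-- Only `C * B` enters the Schur complement, and negating it amounts to `s ↦ -s` there. -/
theorem eval_charpoly_connectionMatrix_mul_eval_neg {s : K} (hs : s ≠ 1) (hs' : s ≠ -1) :
    (connectionMatrix B C).charpoly.eval s * (connectionMatrix B C).charpoly.eval (-s)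
      = (connectionMatrix B (-C)).charpoly.eval s
          * (connectionMatrix B (-C)).charpoly.eval (-s) := by
  have hflip (t : K) : ((t ^ 2 - 1) • 1 - t • (-C * B)).det
      = (((-t) ^ 2 - 1) • 1 - (-t) • (C * B)).det := by
    simp only [neg_sq, Matrix.neg_mul, smul_neg, neg_smul]
  have h₁ := sub_one_pow_mul_eval_charpoly_connectionMatrix B C s
  have h₂ := sub_one_pow_mul_eval_charpoly_connectionMatrix B C (-s)
  have h₃ := sub_one_pow_mul_eval_charpoly_connectionMatrix B (-C) s
  have h₄ := sub_one_pow_mul_eval_charpoly_connectionMatrix B (-C) (-s)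
  rw [hflip] at h₃ h₄
  rw [neg_neg] at h₄
  have hs₁ : (s - 1) ^ Fintype.card n ≠ 0 := pow_ne_zero _ (sub_ne_zero.mpr hs)
  have hs₂ : (-s - 1) ^ Fintype.card n ≠ 0 :=
    pow_ne_zero _ fun h => hs' (by linear_combination -h)
  apply mul_left_cancel₀ (mul_ne_zero hs₁ hs₂)
  calc _ = ((s - 1) ^ Fintype.card n * (connectionMatrix B C).charpoly.eval s)
        * ((-s - 1) ^ Fintype.card n * (connectionMatrix B C).charpoly.eval (-s)) := by ring
    _ = ((s - 1) ^ Fintype.card n * (connectionMatrix B (-C)).charpoly.eval s)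
        * ((-s - 1) ^ Fintype.card n * (connectionMatrix B (-C)).charpoly.eval (-s)) := by
      rw [h₁, h₂, h₃, h₄]; ring
    _ = _ := by ring

theorem charpoly_connectionMatrix_neg_sq [IsAlgClosed K] :
    (connectionMatrix B (-C) ^ 2).charpoly = (connectionMatrix B C ^ 2).charpoly := by
  refine eq_of_infinite_eval_eq _ _ ((Set.finite_singleton 1).infinite_compl.mono ?_)
  intro t ht
  obtain ⟨s, rfl⟩ := IsAlgClosed.exists_pow_nat_eq t two_pos
  have hs : s ≠ 1 := by rintro rfl; simp at ht
  have hs' : s ≠ -1 := by rintro rfl; simp at ht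
  simp only [Set.mem_ofPred_eq, eval_charpoly_sq, mul_assoc,
    eval_charpoly_connectionMatrix_mul_eval_neg B C hs hs']

theorem charpoly_inv_connectionMatrix_sq [IsAlgClosed K] :
    ((connectionMatrix B C)⁻¹ ^ 2).charpoly = (connectionMatrix B C ^ 2).charpoly := by
  rw [charpoly_inv_connectionMatrix_sq_eq_neg, charpoly_connectionMatrix_neg_sq]

end Field

end Matrix

open Finset in
theorem SimpleGraph.incMatrix_transpose_mul_apply_of_ne {R : Type*} [NonAssocSemiring R]
    {e e' : G.edgeSet} (hne : e ≠ e') :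
    ((G.incMatrix R)ᵀ * G.incMatrix R) e e'
      = if ∃ u, u ∈ (e : Sym2 V) ∧ u ∈ (e' : Sym2 V) then 1 else 0 := by
  simp only [Matrix.mul_apply, incMatrix_apply', transpose_apply, ite_zero_mul_ite_zero, one_mul,
    sum_boole, edge_mem_incidenceSet_iff]
  split_ifs with h
  · obtain ⟨u, hu, hu'⟩ := h
    rw [card_eq_one.mpr ⟨u, eq_singleton_iff_unique_mem.mpr ⟨by simp [hu, hu'], fun w hw => ?_⟩⟩,
      Nat.cast_one]
    by_contra hwu
    simp only [mem_filter, mem_univ, true_and] at hw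
    exact hne (Subtype.ext (Sym2.eq_of_ne_mem hwu hw.1 hu hw.2 hu'))
  · simp only [card_eq_zero.mpr (filter_eq_empty_iff.mpr fun u _ hu => h ⟨u, hu⟩), Nat.cast_zero]

theorem connL_map_eq_connectionMatrix {R : Type*} [Ring R] :
    (connL G).map (Int.cast : ℤ → R)
      = connectionMatrix ((G.incMatrix R).submatrix id (↑)) ((G.incMatrix R).submatrix id (↑))ᵀ := by
  ext (u | f) (w | g)
  · by_cases h : u = w <;> simp [connL, touches, sVerts, connectionMatrix, one_apply, h]
  · simp [connL, touches, sVerts, connectionMatrix, SimpleGraph.incMatrix_apply',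
      SimpleGraph.edge_mem_incidenceSet_iff]
  · simp [connL, touches, sVerts, connectionMatrix, SimpleGraph.incMatrix_apply',
      SimpleGraph.edge_mem_incidenceSet_iff]
  · rw [connectionMatrix, fromBlocks_apply₂₂, transpose_submatrix,
      ← submatrix_mul _ _ _ _ _ Function.bijective_id, Matrix.sub_apply, submatrix_apply, one_apply]
    by_cases hfg : f = g
    · subst hfg
      have hf : touches G (.inr f) (.inr f) := ⟨_, Sym2.out_fst_mem f.1, Sym2.out_fst_mem f.1⟩
      rw [SimpleGraph.incMatrix_transpose_mul_diag, if_pos f.2]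
      norm_num [connL, hf]
    · rw [SimpleGraph.incMatrix_transpose_mul_apply_of_ne G hfg]
      simp [connL, touches, sVerts, hfg]

theorem spectral_symmetry :
    (Matrix.charpoly (((connL G).map (Int.cast : ℤ → ℂ)) ^ 2)).roots.map (fun z => z⁻¹)
      = (Matrix.charpoly (((connL G).map (Int.cast : ℤ → ℂ)) ^ 2)).roots := by
  rw [connL_map_eq_connectionMatrix]
  set B : Matrix V G.edgeSet ℂ := (G.incMatrix ℂ).submatrix id (↑)
  have hL : IsUnit (connectionMatrix B Bᵀ ^ 2).det := by
    rw [det_pow, det_connectionMatrix]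
    exact (isUnit_one.neg.pow _).pow _
  rw [← roots_charpoly_inv _ hL, ← inv_pow', charpoly_inv_connectionMatrix_sq]
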